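/- arXiv:2502.19019 — 3 statements merged into one kernel-verified Lean document; each statement's English description precedes it below -/
import Mathlib

section
/- In the limit ν_1 → −∞ and ν_2 → +∞, the net work of the Stirling cycle W_cyc = (1/β_H) ln[p_F(β_H,ν_1)/p_F(β_H,ν_2)] + (1/β_C) ln[p_F(β_C,ν_2)/p_F(β_C,ν_1)] converges to (1/β_H − 1/β_C) h(d,N). -/
/-!
Write `g x = log (1 + exp x)`, so that `log p_F = -g(E)` with `E = N(N-1)βħω/2 - βν - h`.
Since `g x → 0` as `x → -∞` and `g x - x → 0` as `x → +∞`, each isothermal stroke contributes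
`(1/β) log (p_F(ν₁)/p_F(ν₂)) = -(1/β) E(ν₁) + o(1) = ν₁ - N(N-1)ħω/2 + h/β + o(1)`.
The divergent `ν₁` and the `ħω` terms are the same for both temperatures and cancel in the cycle,
leaving `(1/β_H - 1/β_C) h`.
-/

open Real Filter Topology

lemma tendsto_log_one_add_exp_atBot :
    Tendsto (fun x : ℝ => log (1 + exp x)) atBot (𝓝 0) := by
  have h : Tendsto (fun x : ℝ => 1 + exp x) atBot (𝓝 1) := by
    simpa using tendsto_exp_atBot.const_add 1
  simpa [Function.comp_def] using (continuousAt_log one_ne_zero).tendsto.comp h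

lemma log_one_add_exp_sub_self (x : ℝ) : log (1 + exp x) - x = log (1 + exp (-x)) := by
  have h : 1 + exp x = exp x * (1 + exp (-x)) := by
    rw [mul_add, mul_one, ← exp_add, add_neg_cancel, exp_zero, add_comm]
  rw [h, log_mul (exp_ne_zero x) (by positivity), log_exp, add_sub_cancel_left]

lemma tendsto_log_one_add_exp_sub_self_atTop :
    Tendsto (fun x : ℝ => log (1 + exp x) - x) atTop (𝓝 0) := by
  simp only [log_one_add_exp_sub_self]
  exact tendsto_log_one_add_exp_atBot.comp tendsto_neg_atTop_atBot

lemma log_div_one_div_one_add_exp (x y : ℝ) :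
    log ((1 / (1 + exp x)) / (1 / (1 + exp y))) = log (1 + exp y) - log (1 + exp x) := by
  rw [div_div_div_cancel_left' _ _ one_ne_zero, log_div (by positivity) (by positivity)]

lemma tendsto_stroke_work_sub_atBot_atTop {β : ℝ} (hβ : 0 < β) (c : ℝ) :
    Tendsto (fun p : ℝ × ℝ => (1 / β) * log ((1 / (1 + exp (c - β * p.1))) /
        (1 / (1 + exp (c - β * p.2)))) - p.1) (atBot ×ˢ atTop) (𝓝 (-(c / β))) := by
  have hE₁ : Tendsto (fun p : ℝ × ℝ => c - β * p.1) (atBot ×ˢ atTop) atTop :=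
    tendsto_atTop_add_const_left _ c
      (tendsto_neg_atBot_atTop.comp (tendsto_fst.const_mul_atBot hβ))
  have hE₂ : Tendsto (fun p : ℝ × ℝ => c - β * p.2) (atBot ×ˢ atTop) atBot :=
    tendsto_atBot_add_const_left _ c
      (tendsto_neg_atTop_atBot.comp (tendsto_snd.const_mul_atTop hβ))
  have hlim := ((tendsto_log_one_add_exp_atBot.comp hE₂).sub
    (tendsto_log_one_add_exp_sub_self_atTop.comp hE₁)).const_mul (1 / β) |>.sub_const (c / β)
  rw [sub_zero, mul_zero, zero_sub] at hlim
  refine hlim.congr fun p => ?_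
  simp only [Function.comp_apply, log_div_one_div_one_add_exp]
  field_simp
  ring

theorem stirling_cycle_work_limit_general (βH βC hbarω : ℝ) (hβH : 0 < βH) (hβC : 0 < βC)
    (d N : ℕ) :
    Filter.Tendsto
      (fun p : ℝ × ℝ =>
        (1 / βH) * Real.log
            ((1 / (1 + Real.exp ((N : ℝ) * ((N : ℝ) - 1) * βH * hbarω / 2 - βH * p.1
                - (Real.log (Nat.choose (d + N - 1) N : ℝ)
                    - Real.log (Nat.choose d N : ℝ))))) /
              (1 / (1 + Real.exp ((N : ℝ) * ((N : ℝ) - 1) * βH * hbarω / 2 - βH * p.2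
                - (Real.log (Nat.choose (d + N - 1) N : ℝ)
                    - Real.log (Nat.choose d N : ℝ))))))
          + (1 / βC) * Real.log
            ((1 / (1 + Real.exp ((N : ℝ) * ((N : ℝ) - 1) * βC * hbarω / 2 - βC * p.2
                - (Real.log (Nat.choose (d + N - 1) N : ℝ)
                    - Real.log (Nat.choose d N : ℝ))))) /
              (1 / (1 + Real.exp ((N : ℝ) * ((N : ℝ) - 1) * βC * hbarω / 2 - βC * p.1
                - (Real.log (Nat.choose (d + N - 1) N : ℝ)
                    - Real.log (Nat.choose d N : ℝ)))))))
      (Filter.atBot ×ˢ Filter.atTop)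
      (nhds ((1 / βH - 1 / βC) *
        (Real.log (Nat.choose (d + N - 1) N : ℝ)
          - Real.log (Nat.choose d N : ℝ)))) := by
  set h := log (Nat.choose (d + N - 1) N : ℝ) - log (Nat.choose d N : ℝ)
  have hot := tendsto_stroke_work_sub_atBot_atTop hβH ((N : ℝ) * (N - 1) * βH * hbarω / 2 - h)
  have cold := tendsto_stroke_work_sub_atBot_atTop hβC ((N : ℝ) * (N - 1) * βC * hbarω / 2 - h)
  convert hot.sub cold using 1
  · funext p
    simp only [log_div_one_div_one_add_exp]
    ring_nf
  · congr 1
    field_simp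
    ring

theorem stirling_cycle_work_limit (βH βC hbarω : ℝ) (hβH : 0 < βH) (hβC : 0 < βC)
    (hhbarω : 0 < hbarω) (d N : ℕ) (hN : 1 ≤ N) (hd : N ≤ d) :
    Filter.Tendsto
      (fun p : ℝ × ℝ =>
        (1 / βH) * Real.log
            ((1 / (1 + Real.exp ((N : ℝ) * ((N : ℝ) - 1) * βH * hbarω / 2 - βH * p.1
                - (Real.log (Nat.choose (d + N - 1) N : ℝ)
                    - Real.log (Nat.choose d N : ℝ))))) /
              (1 / (1 + Real.exp ((N : ℝ) * ((N : ℝ) - 1) * βH * hbarω / 2 - βH * p.2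
                - (Real.log (Nat.choose (d + N - 1) N : ℝ)
                    - Real.log (Nat.choose d N : ℝ))))))
          + (1 / βC) * Real.log
            ((1 / (1 + Real.exp ((N : ℝ) * ((N : ℝ) - 1) * βC * hbarω / 2 - βC * p.2
                - (Real.log (Nat.choose (d + N - 1) N : ℝ)
                    - Real.log (Nat.choose d N : ℝ))))) /
              (1 / (1 + Real.exp ((N : ℝ) * ((N : ℝ) - 1) * βC * hbarω / 2 - βC * p.1
                - (Real.log (Nat.choose (d + N - 1) N : ℝ)
                    - Real.log (Nat.choose d N : ℝ)))))))
      (Filter.atBot ×ˢ Filter.atTop)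
      (nhds ((1 / βH - 1 / βC) *
        (Real.log (Nat.choose (d + N - 1) N : ℝ)
          - Real.log (Nat.choose d N : ℝ)))) :=
  stirling_cycle_work_limit_general βH βC hbarω hβH hβC d N
end

section
/- In the limit where p_F(β_H, ν_2) → 1, p_F(β_C, ν_1) → 0 (via ν_2 → +∞, ν_1 → −∞), the heat Q_H absorbed from the hot bath converges to (1/β_H) h(d,N) + ∑_{k=1}^N [kħω/(e^{kβ_Hħω}−1) − kħω/(e^{kβ_Cħω}−1)]. -/
open Real Filter Finset

/-- Logistic fermionic overlap. -/
noncomputable def pF (hbarω : ℝ) (d N : ℕ) (β ν : ℝ) : ℝ :=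
  1 / (1 + Real.exp ((N : ℝ) * ((N : ℝ) - 1) * β * hbarω / 2 - β * ν
    - (Real.log (Nat.choose (d + N - 1) N : ℝ) - Real.log (Nat.choose d N : ℝ))))

/-- Fermionic internal energy of `N` particles in a 1D harmonic trap. -/
noncomputable def UF (hbarω : ℝ) (N : ℕ) (β : ℝ) : ℝ :=
  hbarω * (N : ℝ) ^ 2 / 2
    + ∑ k ∈ Finset.Icc 1 N, (k : ℝ) * hbarω / (Real.exp ((k : ℝ) * β * hbarω) - 1)

/-- Bosonic internal energy of `N` particles in a 1D harmonic trap. -/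
noncomputable def UB (hbarω : ℝ) (N : ℕ) (β : ℝ) : ℝ :=
  hbarω * (N : ℝ) / 2
    + ∑ k ∈ Finset.Icc 1 N, (k : ℝ) * hbarω / (Real.exp ((k : ℝ) * β * hbarω) - 1)

/-- Internal energy of Hamiltonian anyons. -/
noncomputable def Uanyon (hbarω : ℝ) (d N : ℕ) (β ν : ℝ) : ℝ :=
  pF hbarω d N β ν * UF hbarω N β + (1 - pF hbarω d N β ν) * (ν + UB hbarω N β)

open Topology

/-!
Write `E = N(N-1)ħω/2` for the zero-temperature gap `UF - UB` and `h = log C(d+N-1,N) - log C(d,N)`;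
then `pF β ν = σ(β(ν - E) + h)` with `σ` the logistic sigmoid. As `ν₂ → ∞` the anyon energy at `βH`
tends to the fermionic one, the bosonic weight `1 - pF` decaying exponentially and so killing the
factor `ν₂`; symmetrically, as `ν₁ → -∞`, `Uanyon βC ν₁ - ν₁` tends to the bosonic energy. The
divergent `ν₁` is cancelled by the entropy term, since `log σ(x) = x + log σ(-x)` with
`log σ(-x) → 0` as `x → -∞`, which leaves `h / βH - E`.
-/

namespace Real

lemma log_sigmoid (x : ℝ) : log (sigmoid x) = x + log (sigmoid (-x)) := by
  rw [← sigmoid_mul_rexp_neg, log_mul (sigmoid_pos x).ne' (exp_pos _).ne', log_exp]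
  ring

lemma tendsto_log_sigmoid_atTop : Tendsto (fun x => log (sigmoid x)) atTop (𝓝 0) := by
  have h := (continuousAt_log one_ne_zero).tendsto.comp tendsto_sigmoid_atTop
  rw [log_one] at h
  exact h

lemma tendsto_mul_sigmoid_atBot : Tendsto (fun x => x * sigmoid x) atBot (𝓝 0) := by
  have hexp : Tendsto (fun x => x * exp x) atBot (𝓝 0) := by
    have h := ((tendsto_pow_mul_exp_neg_atTop_nhds_zero 1).comp tendsto_neg_atBot_atTop).neg
    rw [neg_zero] at h
    exact h.congr fun x => by simp
  -- For `x ≤ 0`, `x eˣ ≤ x σ(x) ≤ 0` since `σ(x) ≤ eˣ`.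
  refine tendsto_of_tendsto_of_tendsto_of_le_of_le' hexp tendsto_const_nhds ?_ ?_
  all_goals filter_upwards [eventually_le_atBot 0] with x hx
  · refine mul_le_mul_of_nonpos_left ?_ hx
    rw [sigmoid_def, inv_le_comm₀ (by positivity) (exp_pos x), ← exp_neg]
    linarith [exp_pos (-x)]
  · exact mul_nonpos_of_nonpos_of_nonneg hx (sigmoid_nonneg x)

lemma tendsto_mul_sigmoid_mul_add_atBot {a : ℝ} (ha : 0 < a) (b : ℝ) :
    Tendsto (fun x => x * sigmoid (a * x + b)) atBot (𝓝 0) := by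
  have hlin : Tendsto (fun x => a * x + b) atBot atBot :=
    tendsto_atBot_add_const_right _ b (tendsto_id.const_mul_atBot ha)
  have h := ((tendsto_mul_sigmoid_atBot.comp hlin).sub
    ((tendsto_sigmoid_atBot.comp hlin).const_mul b)).div_const a
  rw [mul_zero, sub_zero, zero_div] at h
  refine h.congr fun x => ?_
  simp only [Function.comp_apply]
  field_simp
  ring

lemma tendsto_mul_one_sub_sigmoid_mul_add_atTop {a : ℝ} (ha : 0 < a) (b : ℝ) :
    Tendsto (fun x => x * (1 - sigmoid (a * x + b))) atTop (𝓝 0) := by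
  have h := ((tendsto_mul_sigmoid_mul_add_atBot ha (-b)).comp tendsto_neg_atTop_atBot).neg
  rw [neg_zero] at h
  refine h.congr fun x => ?_
  simp only [Function.comp_apply, ← sigmoid_neg]
  ring_nf

lemma tendsto_log_sigmoid_mul_add_div_sub_atBot {a : ℝ} (ha : 0 < a) (b : ℝ) :
    Tendsto (fun x => log (sigmoid (a * x + b)) / a - x) atBot (𝓝 (b / a)) := by
  have hlin : Tendsto (fun x => -(a * x + b)) atBot atTop :=
    tendsto_neg_atBot_atTop.comp
      (tendsto_atBot_add_const_right _ b (tendsto_id.const_mul_atBot ha))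
  have h := ((tendsto_log_sigmoid_atTop.comp hlin).div_const a).const_add (b / a)
  rw [zero_div, add_zero] at h
  refine h.congr fun x => ?_
  rw [Function.comp_apply, log_sigmoid]
  field_simp
  ring

end Real

section Anyon

variable (hbarω : ℝ) (d N : ℕ) {β : ℝ}

lemma pF_eq_sigmoid (β : ℝ) :
    pF hbarω d N β = fun ν => sigmoid (β * ν + ((log (Nat.choose (d + N - 1) N : ℝ)
      - log (Nat.choose d N : ℝ)) - (N : ℝ) * ((N : ℝ) - 1) * β * hbarω / 2)) := by
  ext ν
  rw [pF, sigmoid_def, one_div]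
  ring_nf

lemma pF_pos (β ν : ℝ) : 0 < pF hbarω d N β ν := by
  rw [pF_eq_sigmoid]
  exact sigmoid_pos _

lemma tendsto_pF_atTop (hβ : 0 < β) : Tendsto (pF hbarω d N β) atTop (𝓝 1) := by
  rw [pF_eq_sigmoid]
  exact tendsto_sigmoid_atTop.comp
    (tendsto_atTop_add_const_right _ _ (tendsto_id.const_mul_atTop hβ))

lemma tendsto_pF_atBot (hβ : 0 < β) : Tendsto (pF hbarω d N β) atBot (𝓝 0) := by
  rw [pF_eq_sigmoid]
  exact tendsto_sigmoid_atBot.comp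
    (tendsto_atBot_add_const_right _ _ (tendsto_id.const_mul_atBot hβ))

lemma tendsto_Uanyon_atTop (hβ : 0 < β) :
    Tendsto (Uanyon hbarω d N β) atTop (𝓝 (UF hbarω N β)) := by
  have hpν : Tendsto (fun ν => ν * (1 - pF hbarω d N β ν)) atTop (𝓝 0) := by
    rw [pF_eq_sigmoid]
    exact tendsto_mul_one_sub_sigmoid_mul_add_atTop hβ _
  have h := (((tendsto_pF_atTop hbarω d N hβ).const_sub 1).mul_const
    (UB hbarω N β - UF hbarω N β)).add hpν |>.const_add (UF hbarω N β)
  rw [sub_self, zero_mul, add_zero, add_zero] at h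
  refine h.congr fun ν => ?_
  rw [Uanyon]
  ring

lemma tendsto_Uanyon_sub_atBot (hβ : 0 < β) :
    Tendsto (fun ν => Uanyon hbarω d N β ν - ν) atBot (𝓝 (UB hbarω N β)) := by
  have hpν : Tendsto (fun ν => ν * pF hbarω d N β ν) atBot (𝓝 0) := by
    rw [pF_eq_sigmoid]
    exact tendsto_mul_sigmoid_mul_add_atBot hβ _
  have h := ((tendsto_pF_atBot hbarω d N hβ).mul_const (UF hbarω N β - UB hbarω N β)).sub hpν
    |>.const_add (UB hbarω N β)
  rw [zero_mul, sub_zero, add_zero] at h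
  refine h.congr fun ν => ?_
  rw [Uanyon]
  ring

lemma tendsto_log_pF_atTop (hβ : 0 < β) :
    Tendsto (fun ν => log (pF hbarω d N β ν)) atTop (𝓝 0) := by
  have h := (continuousAt_log one_ne_zero).tendsto.comp (tendsto_pF_atTop hbarω d N hβ)
  rw [log_one] at h
  exact h

lemma tendsto_log_pF_div_sub_atBot (hβ : 0 < β) :
    Tendsto (fun ν => log (pF hbarω d N β ν) / β - ν) atBot
      (𝓝 ((log (Nat.choose (d + N - 1) N : ℝ) - log (Nat.choose d N : ℝ)) / β
        - (N : ℝ) * ((N : ℝ) - 1) * hbarω / 2)) := by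
  rw [pF_eq_sigmoid]
  convert tendsto_log_sigmoid_mul_add_div_sub_atBot hβ _ using 2
  field_simp

end Anyon

theorem stirling_heat_limit_general (βH βC hbarω : ℝ) (hβH : 0 < βH) (hβC : 0 < βC)
    (d N : ℕ) :
    Filter.Tendsto
      (fun p : ℝ × ℝ =>
        Uanyon hbarω d N βH p.2 - Uanyon hbarω d N βC p.1
          + (1 / βH) * Real.log (pF hbarω d N βH p.1 / pF hbarω d N βH p.2))
      (Filter.atBot ×ˢ Filter.atTop)
      (nhds ((1 / βH) *
          (Real.log (Nat.choose (d + N - 1) N : ℝ) - Real.log (Nat.choose d N : ℝ))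
        + ∑ k ∈ Finset.Icc 1 N,
            ((k : ℝ) * hbarω / (Real.exp ((k : ℝ) * βH * hbarω) - 1)
              - (k : ℝ) * hbarω / (Real.exp ((k : ℝ) * βC * hbarω) - 1)))) := by
  have h := (((tendsto_Uanyon_atTop hbarω d N hβH).comp tendsto_snd).sub
      ((tendsto_Uanyon_sub_atBot hbarω d N hβC).comp tendsto_fst)).add
    (((tendsto_log_pF_div_sub_atBot hbarω d N hβH).comp tendsto_fst).sub
      (((tendsto_log_pF_atTop hbarω d N hβH).comp tendsto_snd).div_const βH))
  convert h using 2 with p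
  · simp only [Function.comp_apply]
    rw [log_div (pF_pos hbarω d N βH p.1).ne' (pF_pos hbarω d N βH p.2).ne']
    ring
  · rw [UF, UB, sum_sub_distrib, zero_div, sub_zero]
    ring

theorem stirling_heat_limit (βH βC hbarω : ℝ) (hβH : 0 < βH) (hβC : 0 < βC)
    (hhbarω : 0 < hbarω) (d N : ℕ) (hN : 1 ≤ N) (hd : N ≤ d) :
    Filter.Tendsto
      (fun p : ℝ × ℝ =>
        Uanyon hbarω d N βH p.2 - Uanyon hbarω d N βC p.1
          + (1 / βH) * Real.log (pF hbarω d N βH p.1 / pF hbarω d N βH p.2))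
      (Filter.atBot ×ˢ Filter.atTop)
      (nhds ((1 / βH) *
          (Real.log (Nat.choose (d + N - 1) N : ℝ) - Real.log (Nat.choose d N : ℝ))
        + ∑ k ∈ Finset.Icc 1 N,
            ((k : ℝ) * hbarω / (Real.exp ((k : ℝ) * βH * hbarω) - 1)
              - (k : ℝ) * hbarω / (Real.exp ((k : ℝ) * βC * hbarω) - 1)))) :=
  stirling_heat_limit_general βH βC hbarω hβH hβC d N
end

section
/- If additionally βħω → ∞ for both β_H and β_C (low temperature limit), then the Stirling cycle efficiency η = W_cyc/Q_H converges to the Carnot efficiency 1 − β_H/β_C. -/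
open Real Filter Finset

theorem tendsto_div_exp_mul_sub_one_atTop {a : ℝ} (ha : 0 < a) :
    Tendsto (fun x : ℝ => x / (exp (a * x) - 1)) atTop (nhds 0) := by
  have hexp : Tendsto (fun x : ℝ => exp (a * x) / x) atTop atTop := by
    simpa using tendsto_exp_mul_div_rpow_atTop 1 a ha
  have hquot : Tendsto (fun x : ℝ => (exp (a * x) - 1) / x) atTop atTop := by
    refine (hexp.atTop_add tendsto_inv_atTop_zero.neg).congr fun x => ?_
    ring
  exact hquot.inv_tendsto_atTop.congr fun x => inv_div _ _

theorem tendsto_mul_div_exp_mul_sub_one_atTop {k β : ℝ} (hk : 0 ≤ k) (hβ : 0 < β) :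
    Tendsto (fun x : ℝ => k * x / (exp (k * β * x) - 1)) atTop (nhds 0) := by
  rcases hk.eq_or_lt with rfl | hk
  · simp
  · simpa [mul_div_assoc] using
      (tendsto_div_exp_mul_sub_one_atTop (mul_pos hk hβ)).const_mul k

theorem tendsto_sum_bose_sub_atTop (s : Finset ℕ) {βH βC : ℝ} (hβH : 0 < βH) (hβC : 0 < βC) :
    Tendsto (fun x : ℝ => ∑ k ∈ s,
        ((k : ℝ) * x / (exp ((k : ℝ) * βH * x) - 1)
          - (k : ℝ) * x / (exp ((k : ℝ) * βC * x) - 1))) atTop (nhds 0) := by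
  simpa using tendsto_finsetSum s fun k _ =>
    (tendsto_mul_div_exp_mul_sub_one_atTop k.cast_nonneg hβH).sub
      (tendsto_mul_div_exp_mul_sub_one_atTop k.cast_nonneg hβC)

theorem stirling_carnot_efficiency (βH βC h : ℝ) (hβH : 0 < βH) (hβ : βH < βC)
    (hh : 0 < h) (N : ℕ) :
    Filter.Tendsto
      (fun hbarω : ℝ =>
        ((1 / βH - 1 / βC) * h) /
          ((1 / βH) * h + ∑ k ∈ Finset.Icc 1 N,
            ((k : ℝ) * hbarω / (Real.exp ((k : ℝ) * βH * hbarω) - 1)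
              - (k : ℝ) * hbarω / (Real.exp ((k : ℝ) * βC * hbarω) - 1))))
      Filter.atTop (nhds (1 - βH / βC)) := by
  have hheat := (tendsto_sum_bose_sub_atTop (Icc 1 N) hβH (hβH.trans hβ)).const_add
    ((1 / βH) * h)
  rw [add_zero] at hheat
  have hcarnot : 1 - βH / βC = (1 / βH - 1 / βC) * h / ((1 / βH) * h) := by field_simp
  rw [hcarnot]
  exact tendsto_const_nhds.div hheat (by positivity)
end
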